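/- arXiv:1812.11739 — 4 statements merged into one kernel-verified Lean document; each statement's English description precedes it below -/
import Mathlib

section
/- Let 0 < c < 1/2. There exists C > 0 such that for all w ∈ ℂ with 0 < |w| < c², ∫_{|w|/c < |z| < c} dA(z) / (|z ln|z||² · |ln|w/z||) ≤ C / |ln|w||. -/
/-!
Write `t = -log ‖z‖` and `s = log ‖z‖ - log ‖w‖`, so that `t + s = |log ‖w‖|` and the integrand
is `1 / (‖z‖² t² s)`. The elementary bound `1 / (t² s) ≤ 2 / (t + s) · (1 / t² + 1 / s²)` splits
it into two terms; in polar coordinates `dr / (r t²)` and `dr / (r s²)` are exact derivatives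
of `1 / t` and `-1 / s`, and both integrals are at most `1 / |log c|` because the annulus
keeps `t` and `s` above `|log c|`.
-/

open MeasureTheory Set Real

lemma one_div_sq_mul_le {t s : ℝ} (ht : 0 < t) (hs : 0 < s) :
    1 / (t ^ 2 * s) ≤ 2 / (t + s) * (1 / t ^ 2 + 1 / s ^ 2) := by
  rw [div_add_div _ _ (by positivity) (by positivity), div_mul_div_comm,
    div_le_div_iff₀ (by positivity) (by positivity)]
  nlinarith [sq_nonneg (t - s), mul_pos ht hs, mul_pos (mul_pos ht ht) hs,
    mul_pos (mul_pos hs hs) ht]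

lemma continuousOn_inv_mul_log_sub_sq {p q β : ℝ} (hp : 0 < p)
    (hβ : ∀ y ∈ Icc p q, log y ≠ β) :
    ContinuousOn (fun y => 1 / (y * (log y - β) ^ 2)) (Icc p q) := by
  have hy0 : ∀ y ∈ Icc p q, y ≠ 0 := fun y hy => (hp.trans_le hy.1).ne'
  refine continuousOn_const.div (continuousOn_id.mul
    (((continuousOn_id.log hy0).sub continuousOn_const).pow 2)) fun y hy => ?_
  exact mul_ne_zero (hy0 y hy) (pow_ne_zero 2 (sub_ne_zero.2 (hβ y hy)))

lemma integral_Ioo_inv_mul_log_sub_sq {p q β : ℝ} (hp : 0 < p) (hpq : p ≤ q)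
    (hβ : ∀ y ∈ Icc p q, log y ≠ β) :
    ∫ y in Ioo p q, 1 / (y * (log y - β) ^ 2) = (log p - β)⁻¹ - (log q - β)⁻¹ := by
  have hderiv : ∀ y ∈ uIcc p q,
      HasDerivAt (fun y => -(log y - β)⁻¹) (1 / (y * (log y - β) ^ 2)) y := by
    intro y hy
    rw [uIcc_of_le hpq] at hy
    rw [one_div, mul_inv, ← div_eq_mul_inv, ← neg_neg (y⁻¹ / _), ← neg_div]
    exact (((hasDerivAt_log (hp.trans_le hy.1).ne').sub_const β).inv
      (sub_ne_zero.2 (hβ y hy))).neg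
  rw [← integral_Ioc_eq_integral_Ioo, ← intervalIntegral.integral_of_le hpq,
    intervalIntegral.integral_eq_sub_of_hasDerivAt hderiv
      ((uIcc_of_le hpq ▸ continuousOn_inv_mul_log_sub_sq hp hβ).intervalIntegrable)]
  ring

lemma integral_Ioo_inv_mul_log_sub_sq_le_of_lt {p q β : ℝ} (hp : 0 < p) (hpq : p ≤ q)
    (hβ : β < log p) :
    ∫ y in Ioo p q, 1 / (y * (log y - β) ^ 2) ≤ (log p - β)⁻¹ := by
  have hlog : ∀ y ∈ Icc p q, β < log y := fun y hy => hβ.trans_le (log_le_log hp hy.1)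
  rw [integral_Ioo_inv_mul_log_sub_sq hp hpq fun y hy => (hlog y hy).ne']
  have := inv_nonneg.2 (sub_pos.2 (hlog q ⟨hpq, le_rfl⟩)).le
  linarith

lemma integral_Ioo_inv_mul_log_sub_sq_le_of_gt {p q β : ℝ} (hp : 0 < p) (hpq : p ≤ q)
    (hβ : log q < β) :
    ∫ y in Ioo p q, 1 / (y * (log y - β) ^ 2) ≤ (β - log q)⁻¹ := by
  have hlog : ∀ y ∈ Icc p q, log y < β :=
    fun y hy => (log_le_log (hp.trans_le hy.1) hy.2).trans_lt hβ
  rw [integral_Ioo_inv_mul_log_sub_sq hp hpq fun y hy => (hlog y hy).ne]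
  have : (β - log q)⁻¹ = -(log q - β)⁻¹ := by rw [← neg_sub, inv_neg]
  have := inv_nonpos.2 (sub_neg.2 (hlog p ⟨le_rfl, hpq⟩)).le
  linarith

lemma integral_annulus_fun_norm {p : ℝ} (q : ℝ) (hp : 0 ≤ p) (f : ℝ → ℝ) :
    ∫ z in {z : ℂ | p < ‖z‖ ∧ ‖z‖ < q}, f ‖z‖ = 2 * π * ∫ r in Ioo p q, r * f r := by
  have hS : {z : ℂ | p < ‖z‖ ∧ ‖z‖ < q} = (fun z : ℂ => ‖z‖) ⁻¹' Ioo p q := rfl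
  rw [hS, ← integral_indicator (measurableSet_Ioo.preimage continuous_norm.measurable)]
  have hpos : Ioo p q ⊆ Ioi 0 := fun r hr => hp.trans_lt hr.1
  calc ∫ z : ℂ, ((fun z : ℂ => ‖z‖) ⁻¹' Ioo p q).indicator (fun z => f ‖z‖) z
      = ∫ z : ℂ, (Ioo p q).indicator f ‖z‖ := rfl
    _ = 2 * π * ∫ r in Ioi 0, (Ioo p q).indicator (fun r => r * f r) r := by
      rw [integral_fun_norm_addHaar, Complex.finrank_real_complex, measureReal_def,
        Complex.volume_ball]
      simp only [ENNReal.ofReal_one, one_pow, one_mul, ENNReal.coe_toReal, NNReal.coe_real_pi,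
        Nat.add_one_sub_one, pow_one, smul_eq_mul, nsmul_eq_mul, Nat.cast_ofNat,
        indicator_mul_right]
      ring
    _ = 2 * π * ∫ r in Ioo p q, r * f r := by
      rw [integral_indicator measurableSet_Ioo, Measure.restrict_restrict measurableSet_Ioo,
        inter_eq_left.2 hpos]

lemma mul_one_div_sq_mul_abs_log_le {a r : ℝ} (ha : 0 < a) (har : a < r) (hr : r < 1) :
    r * (1 / ((r * |log r|) ^ 2 * |log (a / r)|))
      ≤ 2 / |log a| * (1 / (r * log r ^ 2) + 1 / (r * (log r - log a) ^ 2)) := by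
  have hr0 : 0 < r := ha.trans har
  have ht : 0 < -log r := neg_pos.2 (log_neg hr0 hr)
  have hs : 0 < log r - log a := sub_pos.2 (log_lt_log ha har)
  have hts : -log r + (log r - log a) = |log a| := by
    rw [abs_of_neg (log_neg ha (har.trans hr))]; ring
  have hlog : |log (a / r)| = log r - log a := by
    rw [log_div ha.ne' hr0.ne', abs_of_neg (by linarith)]; ring
  calc r * (1 / ((r * |log r|) ^ 2 * |log (a / r)|))
      = 1 / r * (1 / ((-log r) ^ 2 * (log r - log a))) := by
        rw [hlog, mul_pow, sq_abs, neg_sq]; field_simp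
    _ ≤ 1 / r * (2 / (-log r + (log r - log a)) *
          (1 / (-log r) ^ 2 + 1 / (log r - log a) ^ 2)) := by
        gcongr; exact one_div_sq_mul_le ht hs
    _ = 2 / |log a| * (1 / (r * log r ^ 2) + 1 / (r * (log r - log a) ^ 2)) := by
        rw [hts, neg_sq]; field_simp

lemma integrableOn_inv_mul_log_sub_sq {p q β : ℝ} (hp : 0 < p)
    (hβ : ∀ y ∈ Icc p q, log y ≠ β) :
    IntegrableOn (fun y => 1 / (y * (log y - β) ^ 2)) (Ioo p q) :=
  ((continuousOn_inv_mul_log_sub_sq hp hβ).integrableOn_compact isCompact_Icc).mono_set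
    Ioo_subset_Icc_self

lemma integral_Ioo_mul_one_div_sq_mul_abs_log_le {a p q : ℝ} (ha : 0 < a) (hap : a < p)
    (hpq : p ≤ q) (hq : q < 1) :
    ∫ r in Ioo p q, r * (1 / ((r * |log r|) ^ 2 * |log (a / r)|))
      ≤ 2 / |log a| * ((-log q)⁻¹ + (log p - log a)⁻¹) := by
  have hp : 0 < p := ha.trans hap
  have hlog_neg : ∀ y ∈ Icc p q, log y < 0 :=
    fun y hy => log_neg (hp.trans_le hy.1) (hy.2.trans_lt hq)
  have hlog_gt : ∀ y ∈ Icc p q, log a < log y := fun y hy => log_lt_log ha (hap.trans_le hy.1)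
  have hI₁ := integrableOn_inv_mul_log_sub_sq (β := 0) hp fun y hy => (hlog_neg y hy).ne
  have hI₂ := integrableOn_inv_mul_log_sub_sq hp fun y hy => (hlog_gt y hy).ne'
  have h₁ := integral_Ioo_inv_mul_log_sub_sq_le_of_gt hp hpq (hlog_neg q ⟨hpq, le_rfl⟩)
  have h₂ := integral_Ioo_inv_mul_log_sub_sq_le_of_lt hp hpq (hlog_gt p ⟨le_rfl, hpq⟩)
  simp only [sub_zero, zero_sub] at hI₁ h₁
  calc ∫ r in Ioo p q, r * (1 / ((r * |log r|) ^ 2 * |log (a / r)|))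
      ≤ ∫ r in Ioo p q, 2 / |log a| * (1 / (r * log r ^ 2) + 1 / (r * (log r - log a) ^ 2)) :=
        setIntegral_mono_of_nonneg (fun r hr => by have := hp.trans hr.1; positivity)
          (fun r hr => mul_one_div_sq_mul_abs_log_le ha (hap.trans hr.1) (hr.2.trans hq))
          ((hI₁.add hI₂).const_mul _)
    _ = 2 / |log a| * ((∫ r in Ioo p q, 1 / (r * log r ^ 2))
          + ∫ r in Ioo p q, 1 / (r * (log r - log a) ^ 2)) := by
        rw [integral_const_mul, integral_add hI₁ hI₂]
    _ ≤ 2 / |log a| * ((-log q)⁻¹ + (log p - log a)⁻¹) := by gcongr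

/-- For `0 < c < 1/2` there is `C > 0` such that for every `w ∈ ℂ` with `0 < |w| < c²`,
`∫_{|w|/c < |z| < c} dA(z) / ((|z|·|ln|z||)² · |ln|w/z||) ≤ C / |ln|w||`. -/
theorem stmt5 (c : ℝ) (hc0 : 0 < c) (hc : c < 1 / 2) :
    ∃ C > 0, ∀ w : ℂ, 0 < ‖w‖ → ‖w‖ < c ^ 2 →
      (∫ z in {z : ℂ | ‖w‖ / c < ‖z‖ ∧ ‖z‖ < c},
          1 / ((‖z‖ * |Real.log ‖z‖|) ^ 2 * |Real.log (‖w‖ / ‖z‖)|))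
        ≤ C / |Real.log ‖w‖| := by
  have hc1 : c < 1 := hc.trans (by norm_num)
  have hlogc : 0 < -log c := neg_pos.2 (log_neg hc0 hc1)
  refine ⟨8 * π / -log c, by positivity, fun w hw hwc => ?_⟩
  have hcw : ‖w‖ < ‖w‖ / c := (lt_div_iff₀ hc0).2 (by nlinarith)
  have hwc' : ‖w‖ / c ≤ c := ((div_lt_iff₀ hc0).2 (by nlinarith)).le
  have hlog : log (‖w‖ / c) - log ‖w‖ = -log c := by
    rw [log_div hw.ne' hc0.ne']; ring
  rw [integral_annulus_fun_norm c (div_pos hw hc0).le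
    (fun r => 1 / ((r * |log r|) ^ 2 * |log (‖w‖ / r)|))]
  calc 2 * π * ∫ r in Ioo (‖w‖ / c) c, r * (1 / ((r * |log r|) ^ 2 * |log (‖w‖ / r)|))
      ≤ 2 * π * (2 / |log ‖w‖| * ((-log c)⁻¹ + (log (‖w‖ / c) - log ‖w‖)⁻¹)) := by
        gcongr; exact integral_Ioo_mul_one_div_sq_mul_abs_log_le hw hcw hwc' hc1
    _ = 8 * π / -log c / |log ‖w‖| := by rw [hlog]; ring
end

section
/- Define a_p(z,w) = -(ln|ln|z|²|)^p (ln|ln|w|²|)^p for (z,w) ∈ ℂ² with 0 < |z|, |w| < 1/2. Then the (1,1)-form i ∂∂̄ a_p(z,w) is positive in a sufficiently small neighborhood of the origin minus the coordinate axes; more precisely, its dominating terms are i·p(ln|ln|z|²|)^{p-1}(ln|ln|w|²|)^{p-1}·[(ln|ln|z|²|) dw dw̄/|w ln|w|²|² + (ln|ln|w|²|) dz dz̄/|z ln|z|²|²], which dominate the cross terms near (0,0). -/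
/-- The function `a_p(z,w) = -(ln|ln|z|²|)^p (ln|ln|w|²|)^p`. -/
noncomputable def apFun (p : ℕ) (x : ℂ × ℂ) : ℝ :=
  -((Real.log |Real.log (‖x.1‖ ^ 2)|) ^ p * (Real.log |Real.log (‖x.2‖ ^ 2)|) ^ p)

/-- The Levi form of a function `f : ℂ² → ℝ` at `x` evaluated at a tangent vector `v`:
`D²f(x)(v,v) + D²f(x)(iv,iv)`, which equals `4·Σ_{jk} (∂∂̄f)_{jk} v_j v̄_k` for smooth `f`.
Its nonnegativity for all `v` expresses positivity of the `(1,1)`-form `i∂∂̄f` at `x`. -/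
noncomputable def leviForm2 (f : ℂ × ℂ → ℝ) (x v : ℂ × ℂ) : ℝ :=
  iteratedFDeriv ℝ 2 f x ![v, v] +
    iteratedFDeriv ℝ 2 f x ![Complex.I • v, Complex.I • v]

/-!
Along a real line `t ↦ x + t • v`, with `x = (z, w)` and `v = (u, u')`, the function
`φ(‖z‖²) ψ(‖w‖²)` is a product of two functions of `t`, so its second derivative follows from
the product and chain rules. Summing over the directions `v` and `i • v`, the identity `⟪z, u⟫² + ⟪z, i u⟫² = ‖z‖² ‖u‖²`
turns the diagonal terms into `4 (s φ')'(‖z‖²) ‖u‖² ψ(‖w‖²)` and its analogue, while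
Cauchy–Schwarz bounds the mixed term. A weighted AM–GM then shows that `-φ(‖z‖²) ψ(‖w‖²)` has
nonnegative Levi form whenever `φ, ψ > 0` and `s φ'(s)² ≤ -(s φ')'(s) φ(s)`, likewise for `ψ`.

For `φ = P ∘ log ∘ log` this condition becomes `P'(L)² ≤ (P'(L) - P''(L)) P(L)` at
`L = log (-log s)`; for `P = (·)^p` it says `p ≤ L - p + 1`, which holds once
`s < exp (-exp (2p))`.
-/

open Real Filter Topology

section SecondDerivative

variable {E F : Type*} [NormedAddCommGroup E] [NormedSpace ℝ E]
  [NormedAddCommGroup F] [NormedSpace ℝ F]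

theorem iteratedFDeriv_two_apply_eq_deriv_deriv {f : E → F} {x : E} (hf : ContDiffAt ℝ 2 f x)
    (v : E) : iteratedFDeriv ℝ 2 f x ![v, v] = deriv (deriv fun t : ℝ => f (x + t • v)) 0 := by
  have hline : Tendsto (fun t : ℝ => x + t • v) (𝓝 0) (𝓝 x) := by
    simpa using (Continuous.tendsto (by fun_prop) 0 : Tendsto (fun t : ℝ => x + t • v) _ _)
  have hderiv : deriv (fun t : ℝ => f (x + t • v)) =ᶠ[𝓝 0]
      fun t => iteratedFDeriv ℝ 1 f (x + t • v) (fun _ => v) := by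
    filter_upwards [hline.eventually (hf.eventually (by simp))] with t ht
    rw [(ht.differentiableAt (by simp)).deriv_comp_add_smul, iteratedFDeriv_one_apply]
  rw [hderiv.deriv_eq, ContDiffAt.deriv_fderiv_add_smul (n := 1)
    (by rw [zero_smul, add_zero]; exact hf), zero_smul, add_zero]
  congr 1
  ext i
  fin_cases i <;> rfl

theorem ContDiffAt.eventually_differentiableAt {f : ℝ → F} {t : ℝ} (hf : ContDiffAt ℝ 2 f t) :
    ∀ᶠ s in 𝓝 t, DifferentiableAt ℝ f s :=
  (hf.eventually (by simp)).mono fun _ hs => hs.differentiableAt (by simp)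

theorem ContDiffAt.differentiableAt_deriv {f : ℝ → F} {t : ℝ} (hf : ContDiffAt ℝ 2 f t) :
    DifferentiableAt ℝ (deriv f) t :=
  (hf.derivWithin (m := 1) (by norm_num)).differentiableAt (by simp)

theorem deriv_deriv_mul {u w : ℝ → ℝ} {t : ℝ} (hu : ContDiffAt ℝ 2 u t)
    (hw : ContDiffAt ℝ 2 w t) :
    deriv (deriv fun s => u s * w s) t =
      deriv (deriv u) t * w t + 2 * (deriv u t * deriv w t) + u t * deriv (deriv w) t := by
  have h : deriv (fun s => u s * w s) =ᶠ[𝓝 t] fun s => deriv u s * w s + u s * deriv w s := by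
    filter_upwards [hu.eventually_differentiableAt, hw.eventually_differentiableAt] with s hus hws
    exact deriv_mul hus hws
  have hu' := (hu.differentiableAt (n := 2) (by simp)).hasDerivAt
  have hw' := (hw.differentiableAt (n := 2) (by simp)).hasDerivAt
  rw [h.deriv_eq]
  refine ((hu.differentiableAt_deriv.hasDerivAt.mul hw').add
    (hu'.mul hw.differentiableAt_deriv.hasDerivAt)).deriv.trans ?_
  ring

theorem deriv_deriv_comp {φ q : ℝ → ℝ} {t : ℝ} (hφ : ContDiffAt ℝ 2 φ (q t))
    (hq : ContDiffAt ℝ 2 q t) :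
    deriv (deriv (φ ∘ q)) t =
      deriv (deriv φ) (q t) * deriv q t ^ 2 + deriv φ (q t) * deriv (deriv q) t := by
  have h : deriv (φ ∘ q) =ᶠ[𝓝 t] fun s => deriv φ (q s) * deriv q s := by
    filter_upwards [hq.continuousAt.tendsto.eventually hφ.eventually_differentiableAt,
      hq.eventually_differentiableAt] with s hφs hqs
    exact deriv_comp s hφs hqs
  have hφq := hφ.differentiableAt_deriv.hasDerivAt.comp t
    (hq.differentiableAt (n := 2) (by simp)).hasDerivAt
  rw [h.deriv_eq]
  refine (hφq.mul hq.differentiableAt_deriv.hasDerivAt).deriv.trans ?_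
  simp only [Function.comp_apply]
  ring

end SecondDerivative

section Radial

variable {G : Type*} [NormedAddCommGroup G] [InnerProductSpace ℝ G] {z u : G} {φ : ℝ → ℝ}

theorem hasDerivAt_add_smul (z u : G) (t : ℝ) : HasDerivAt (fun s : ℝ => z + s • u) u t := by
  simpa using ((hasDerivAt_id t).smul_const u).const_add z

theorem deriv_norm_add_smul_sq (z u : G) :
    deriv (fun s : ℝ => ‖z + s • u‖ ^ 2) = fun t => 2 * inner ℝ (z + t • u) u :=
  funext fun t => (hasDerivAt_add_smul z u t).norm_sq.deriv

theorem deriv_deriv_norm_add_smul_sq (z u : G) (t : ℝ) :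
    deriv (deriv fun s : ℝ => ‖z + s • u‖ ^ 2) t = 2 * ‖u‖ ^ 2 := by
  rw [deriv_norm_add_smul_sq]
  simpa using (((hasDerivAt_add_smul z u t).inner ℝ (hasDerivAt_const t u)).const_mul 2).deriv

theorem ContDiffAt.comp_norm_add_smul_sq (hφ : ContDiffAt ℝ 2 φ (‖z‖ ^ 2)) :
    ContDiffAt ℝ 2 (fun t : ℝ => φ (‖z + t • u‖ ^ 2)) 0 :=
  ContDiffAt.comp (g := φ) (f := fun t : ℝ => ‖z + t • u‖ ^ 2) 0 (by simpa using hφ)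
    (contDiff_norm_sq ℝ |>.comp (by fun_prop)).contDiffAt

theorem deriv_comp_norm_add_smul_sq (hφ : ContDiffAt ℝ 2 φ (‖z‖ ^ 2)) :
    deriv (fun t : ℝ => φ (‖z + t • u‖ ^ 2)) 0 = deriv φ (‖z‖ ^ 2) * (2 * inner ℝ z u) := by
  have hφ0 : HasDerivAt φ (deriv φ (‖z‖ ^ 2)) (‖z + (0 : ℝ) • u‖ ^ 2) := by
    simpa using (hφ.differentiableAt (by simp)).hasDerivAt
  simpa [Function.comp_def] using (hφ0.comp (0 : ℝ) (hasDerivAt_add_smul z u 0).norm_sq).deriv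

theorem deriv_deriv_comp_norm_add_smul_sq (hφ : ContDiffAt ℝ 2 φ (‖z‖ ^ 2)) :
    deriv (deriv fun t : ℝ => φ (‖z + t • u‖ ^ 2)) 0 =
      deriv (deriv φ) (‖z‖ ^ 2) * (2 * inner ℝ z u) ^ 2 + deriv φ (‖z‖ ^ 2) * (2 * ‖u‖ ^ 2) := by
  have := deriv_deriv_comp (q := fun t : ℝ => ‖z + t • u‖ ^ 2) (t := 0) (by simpa using hφ)
    (contDiff_norm_sq ℝ |>.comp (by fun_prop)).contDiffAt
  rw [deriv_deriv_norm_add_smul_sq, deriv_norm_add_smul_sq] at this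
  simpa [Function.comp_def] using this

end Radial

section Product

variable {E F : Type*} [NormedAddCommGroup E] [InnerProductSpace ℝ E]
  [NormedAddCommGroup F] [InnerProductSpace ℝ F] {φ ψ : ℝ → ℝ} {x : E × F}

theorem iteratedFDeriv_two_radial_mul (hφ : ContDiffAt ℝ 2 φ (‖x.1‖ ^ 2))
    (hψ : ContDiffAt ℝ 2 ψ (‖x.2‖ ^ 2)) (w : E × F) :
    iteratedFDeriv ℝ 2 (fun y : E × F => φ (‖y.1‖ ^ 2) * ψ (‖y.2‖ ^ 2)) x ![w, w] =
      (deriv (deriv φ) (‖x.1‖ ^ 2) * (2 * inner ℝ x.1 w.1) ^ 2 +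
          deriv φ (‖x.1‖ ^ 2) * (2 * ‖w.1‖ ^ 2)) * ψ (‖x.2‖ ^ 2) +
        2 * (deriv φ (‖x.1‖ ^ 2) * (2 * inner ℝ x.1 w.1) *
          (deriv ψ (‖x.2‖ ^ 2) * (2 * inner ℝ x.2 w.2))) +
        φ (‖x.1‖ ^ 2) * (deriv (deriv ψ) (‖x.2‖ ^ 2) * (2 * inner ℝ x.2 w.2) ^ 2 +
          deriv ψ (‖x.2‖ ^ 2) * (2 * ‖w.2‖ ^ 2)) := by
  have hf : ContDiffAt ℝ 2 (fun y : E × F => φ (‖y.1‖ ^ 2) * ψ (‖y.2‖ ^ 2)) x :=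
    (hφ.comp x ((contDiff_norm_sq ℝ).comp contDiff_fst).contDiffAt).mul
      (hψ.comp x ((contDiff_norm_sq ℝ).comp contDiff_snd).contDiffAt)
  rw [iteratedFDeriv_two_apply_eq_deriv_deriv hf,
    ← deriv_comp_norm_add_smul_sq hφ, ← deriv_comp_norm_add_smul_sq hψ,
    ← deriv_deriv_comp_norm_add_smul_sq hφ, ← deriv_deriv_comp_norm_add_smul_sq hψ]
  simpa using deriv_deriv_mul hφ.comp_norm_add_smul_sq hψ.comp_norm_add_smul_sq

end Product

section Levi

open Complex

theorem inner_sq_add_inner_I_smul_sq (z u : ℂ) :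
    inner ℝ z u ^ 2 + inner ℝ z (I • u) ^ 2 = ‖z‖ ^ 2 * ‖u‖ ^ 2 := by
  simp only [← normSq_eq_norm_sq, normSq_apply]
  simp [Complex.inner]
  ring

theorem abs_inner_mul_inner_add_inner_I_smul_mul_le (z₁ u₁ z₂ u₂ : ℂ) :
    |inner ℝ z₁ u₁ * inner ℝ z₂ u₂ + inner ℝ z₁ (I • u₁) * inner ℝ z₂ (I • u₂)| ≤
      ‖z₁‖ * ‖u₁‖ * (‖z₂‖ * ‖u₂‖) := by
  refine abs_le_of_sq_le_sq ?_ (by positivity)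
  calc _ ≤ (inner ℝ z₁ u₁ ^ 2 + inner ℝ z₁ (I • u₁) ^ 2) *
        (inner ℝ z₂ u₂ ^ 2 + inner ℝ z₂ (I • u₂) ^ 2) := by
        nlinarith [sq_nonneg (inner ℝ z₁ u₁ * inner ℝ z₂ (I • u₂) -
          inner ℝ z₁ (I • u₁) * inner ℝ z₂ u₂)]
    _ = _ := by rw [inner_sq_add_inner_I_smul_sq, inner_sq_add_inner_I_smul_sq]; ring

theorem leviForm2_neg (f : ℂ × ℂ → ℝ) (x v : ℂ × ℂ) :
    leviForm2 (fun y => -f y) x v = -leviForm2 f x v := by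
  simp only [leviForm2, ← Pi.neg_def, iteratedFDeriv_neg_apply,
    neg_apply, neg_add]

variable {φ ψ : ℝ → ℝ} {x : ℂ × ℂ}

theorem leviForm2_radial_mul (hφ : ContDiffAt ℝ 2 φ (‖x.1‖ ^ 2))
    (hψ : ContDiffAt ℝ 2 ψ (‖x.2‖ ^ 2)) (v : ℂ × ℂ) :
    leviForm2 (fun y : ℂ × ℂ => φ (‖y.1‖ ^ 2) * ψ (‖y.2‖ ^ 2)) x v =
      4 * ((‖x.1‖ ^ 2 * deriv (deriv φ) (‖x.1‖ ^ 2) + deriv φ (‖x.1‖ ^ 2)) * ‖v.1‖ ^ 2 *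
            ψ (‖x.2‖ ^ 2) +
          φ (‖x.1‖ ^ 2) * ((‖x.2‖ ^ 2 * deriv (deriv ψ) (‖x.2‖ ^ 2) + deriv ψ (‖x.2‖ ^ 2)) *
            ‖v.2‖ ^ 2) +
          2 * (deriv φ (‖x.1‖ ^ 2) * deriv ψ (‖x.2‖ ^ 2)) *
            (inner ℝ x.1 v.1 * inner ℝ x.2 v.2 + inner ℝ x.1 (I • v.1) * inner ℝ x.2 (I • v.2))) := by
  rw [leviForm2, iteratedFDeriv_two_radial_mul hφ hψ, iteratedFDeriv_two_radial_mul hφ hψ]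
  simp only [Prod.smul_fst, Prod.smul_snd, norm_smul, norm_I, one_mul]
  linear_combination 4 * deriv (deriv φ) (‖x.1‖ ^ 2) * ψ (‖x.2‖ ^ 2) *
      inner_sq_add_inner_I_smul_sq x.1 v.1 +
    4 * φ (‖x.1‖ ^ 2) * deriv (deriv ψ) (‖x.2‖ ^ 2) * inner_sq_add_inner_I_smul_sq x.2 v.2

theorem two_mul_mul_le_of_sq_le_mul {c₁ c₂ A₁ A₂ H₁ H₂ : ℝ} (hH₁ : 0 < H₁) (hH₂ : 0 < H₂)
    (h₁ : c₁ ^ 2 ≤ A₁ * H₁) (h₂ : c₂ ^ 2 ≤ A₂ * H₂) : 2 * (c₁ * c₂) ≤ A₁ * H₂ + A₂ * H₁ := by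
  have h : H₁ * H₂ * (2 * (c₁ * c₂)) ≤ H₁ * H₂ * (A₁ * H₂ + A₂ * H₁) := by
    nlinarith [sq_nonneg (c₁ * H₂ - c₂ * H₁), mul_le_mul_of_nonneg_left h₁ (sq_nonneg H₂),
      mul_le_mul_of_nonneg_left h₂ (sq_nonneg H₁)]
  exact le_of_mul_le_mul_left h (mul_pos hH₁ hH₂)

theorem leviForm2_neg_radial_mul_nonneg
    (hφ : ContDiffAt ℝ 2 φ (‖x.1‖ ^ 2)) (hψ : ContDiffAt ℝ 2 ψ (‖x.2‖ ^ 2))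
    (hφ_pos : 0 < φ (‖x.1‖ ^ 2)) (hψ_pos : 0 < ψ (‖x.2‖ ^ 2))
    (hφ_key : ‖x.1‖ ^ 2 * deriv φ (‖x.1‖ ^ 2) ^ 2 ≤
      -(‖x.1‖ ^ 2 * deriv (deriv φ) (‖x.1‖ ^ 2) + deriv φ (‖x.1‖ ^ 2)) * φ (‖x.1‖ ^ 2))
    (hψ_key : ‖x.2‖ ^ 2 * deriv ψ (‖x.2‖ ^ 2) ^ 2 ≤
      -(‖x.2‖ ^ 2 * deriv (deriv ψ) (‖x.2‖ ^ 2) + deriv ψ (‖x.2‖ ^ 2)) * ψ (‖x.2‖ ^ 2))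
    (v : ℂ × ℂ) :
    0 ≤ leviForm2 (fun y : ℂ × ℂ => -(φ (‖y.1‖ ^ 2) * ψ (‖y.2‖ ^ 2))) x v := by
  rw [leviForm2_neg, leviForm2_radial_mul hφ hψ]
  set X := inner ℝ x.1 v.1 * inner ℝ x.2 v.2 + inner ℝ x.1 (I • v.1) * inner ℝ x.2 (I • v.2)
  have hX : |X| ≤ ‖x.1‖ * ‖v.1‖ * (‖x.2‖ * ‖v.2‖) :=
    abs_inner_mul_inner_add_inner_I_smul_mul_le x.1 v.1 x.2 v.2
  have hamgm := two_mul_mul_le_of_sq_le_mul (c₁ := |deriv φ (‖x.1‖ ^ 2)| * (‖x.1‖ * ‖v.1‖))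
    (c₂ := |deriv ψ (‖x.2‖ ^ 2)| * (‖x.2‖ * ‖v.2‖))
    (A₁ := -(‖x.1‖ ^ 2 * deriv (deriv φ) (‖x.1‖ ^ 2) + deriv φ (‖x.1‖ ^ 2)) * ‖v.1‖ ^ 2)
    (A₂ := -(‖x.2‖ ^ 2 * deriv (deriv ψ) (‖x.2‖ ^ 2) + deriv ψ (‖x.2‖ ^ 2)) * ‖v.2‖ ^ 2)
    hφ_pos hψ_pos
    (by rw [mul_pow, sq_abs]; linear_combination ‖v.1‖ ^ 2 * hφ_key)
    (by rw [mul_pow, sq_abs]; linear_combination ‖v.2‖ ^ 2 * hψ_key)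
  have hcross : deriv φ (‖x.1‖ ^ 2) * deriv ψ (‖x.2‖ ^ 2) * X ≤
      |deriv φ (‖x.1‖ ^ 2)| * (‖x.1‖ * ‖v.1‖) * (|deriv ψ (‖x.2‖ ^ 2)| * (‖x.2‖ * ‖v.2‖)) := by
    refine (le_abs_self _).trans ?_
    rw [abs_mul, abs_mul]
    nlinarith [mul_le_mul_of_nonneg_left hX
      (mul_nonneg (abs_nonneg (deriv φ (‖x.1‖ ^ 2))) (abs_nonneg (deriv ψ (‖x.2‖ ^ 2))))]
  linear_combination 4 * hamgm + 8 * hcross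

end Levi

section LogLog

theorem lt_log_log_of_lt_exp_neg_exp {c s : ℝ} (hs : 0 < s) (hsc : s < exp (-exp c)) :
    c < log (log s) := by
  have hlog : log s < -exp c := (log_lt_iff_lt_exp hs).2 hsc
  rw [← log_neg_eq_log, ← log_exp c]
  exact log_lt_log (exp_pos c) (by linarith)

theorem log_neg_of_lt_exp_neg_exp {c s : ℝ} (hs : 0 < s) (hsc : s < exp (-exp c)) :
    log s < 0 :=
  ((log_lt_iff_lt_exp hs).2 hsc).trans (neg_neg_of_pos (exp_pos c))

theorem sq_deriv_le_of_comp_log_log {P : ℝ → ℝ} {s : ℝ} (hs : 0 < s) (hls : log s ≠ 0)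
    (hP : ContDiffAt ℝ 2 P (log (log s)))
    (hPkey : deriv P (log (log s)) ^ 2 ≤
      (deriv P (log (log s)) - deriv (deriv P) (log (log s))) * P (log (log s))) :
    s * deriv (P ∘ log ∘ log) s ^ 2 ≤
      -(s * deriv (deriv (P ∘ log ∘ log)) s + deriv (P ∘ log ∘ log) s) * P (log (log s)) := by
  have hlog_s : ContDiffAt ℝ 2 log s := contDiffAt_log.2 hs.ne'
  have hlog_ls : ContDiffAt ℝ 2 log (log s) := contDiffAt_log.2 hls
  have hloglog : ContDiffAt ℝ 2 (log ∘ log) s := hlog_ls.comp s hlog_s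
  have d1 : deriv (log ∘ log) s = (log s)⁻¹ * s⁻¹ :=
    ((hasDerivAt_log hls).comp s (hasDerivAt_log hs.ne')).deriv
  have d2 : deriv (deriv (log ∘ log)) s =
      -((log s) ^ 2)⁻¹ * s⁻¹ ^ 2 + (log s)⁻¹ * -(s ^ 2)⁻¹ := by
    rw [deriv_deriv_comp hlog_ls hlog_s, deriv_log', deriv_inv']
  rw [deriv_deriv_comp (q := log ∘ log) hP hloglog,
    deriv_comp s (hP.differentiableAt (by simp)) (hloglog.differentiableAt (by simp)), d1, d2]
  simp only [Function.comp_apply]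
  set D₁ := deriv P (log (log s))
  set D₂ := deriv (deriv P) (log (log s))
  have hgap : -(s * (D₂ * ((log s)⁻¹ * s⁻¹) ^ 2 +
        D₁ * (-((log s) ^ 2)⁻¹ * s⁻¹ ^ 2 + (log s)⁻¹ * -(s ^ 2)⁻¹)) + D₁ * ((log s)⁻¹ * s⁻¹)) *
        P (log (log s)) - s * (D₁ * ((log s)⁻¹ * s⁻¹)) ^ 2 =
      ((D₁ - D₂) * P (log (log s)) - D₁ ^ 2) / (s * log s ^ 2) := by
    field_simp
    ring
  have := div_nonneg (sub_nonneg.2 hPkey) (by positivity : 0 ≤ s * log s ^ 2)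
  linarith

theorem sq_mul_pow_pred_le (p : ℕ) {y : ℝ} (hy : 2 * p - 1 ≤ y) :
    (p * y ^ (p - 1)) ^ 2 ≤ (p * y ^ (p - 1) - p * (p - 1) * y ^ (p - 2)) * y ^ p := by
  rcases p with _ | _ | k
  · simp
  · norm_num at hy ⊢
    linarith
  · simp only [Nat.add_sub_cancel, show k + 1 + 1 - 2 = k by omega]
    push_cast at hy ⊢
    have hk : 0 ≤ y - (2 * k + 3) := by linarith
    have key : ((k + 1 + 1) * y ^ (k + 1) - (k + 1 + 1) * (k + 1 + 1 - 1) * y ^ k) *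
        y ^ (k + 1 + 1) - ((k + 1 + 1) * y ^ (k + 1)) ^ 2 =
        (k + 2) * (y ^ k) ^ 2 * y ^ 2 * (y - (2 * k + 3)) := by
      ring
    rw [← sub_nonneg, key]
    exact mul_nonneg (by positivity) hk

noncomputable def logLogPow (p : ℕ) (s : ℝ) : ℝ := log |log s| ^ p

theorem logLogPow_eq_comp (p : ℕ) : logLogPow p = (· ^ p) ∘ log ∘ log := by
  ext s
  simp [logLogPow, log_abs]

variable {p : ℕ} {s : ℝ}

theorem contDiffAt_logLogPow (hs : 0 < s) (hsp : s < exp (-exp (2 * p))) :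
    ContDiffAt ℝ 2 (logLogPow p) s := by
  rw [logLogPow_eq_comp]
  exact (contDiff_id.pow p).contDiffAt.comp s
    ((contDiffAt_log.2 (log_neg_of_lt_exp_neg_exp hs hsp).ne).comp s (contDiffAt_log.2 hs.ne'))

theorem logLogPow_pos (hs : 0 < s) (hsp : s < exp (-exp (2 * p))) : 0 < logLogPow p s := by
  have hL := lt_log_log_of_lt_exp_neg_exp hs hsp
  rw [logLogPow, log_abs]
  exact pow_pos (by linarith [show (0 : ℝ) ≤ 2 * p by positivity]) p

theorem sq_deriv_logLogPow_le (hs : 0 < s) (hsp : s < exp (-exp (2 * p))) :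
    s * deriv (logLogPow p) s ^ 2 ≤
      -(s * deriv (deriv (logLogPow p)) s + deriv (logLogPow p) s) * logLogPow p s := by
  have hL := lt_log_log_of_lt_exp_neg_exp hs hsp
  rw [logLogPow_eq_comp]
  refine sq_deriv_le_of_comp_log_log hs (log_neg_of_lt_exp_neg_exp hs hsp).ne
    (contDiff_id.pow p).contDiffAt ?_
  have h2 : deriv (deriv fun y : ℝ => y ^ p) (log (log s)) =
      p * (p - 1) * log (log s) ^ (p - 2) := by
    simpa [-iter_deriv_pow', Finset.prod_range_succ] using iter_deriv_pow p (log (log s)) 2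
  rw [deriv_pow_field, h2]
  exact sq_mul_pow_pred_le p (by linarith)

end LogLog

theorem stmt8_general (p : ℕ) :
    ∃ ε > 0, ∀ x : ℂ × ℂ,
      0 < ‖x.1‖ → ‖x.1‖ < ε → 0 < ‖x.2‖ → ‖x.2‖ < ε →
      ∀ v : ℂ × ℂ, 0 ≤ leviForm2 (apFun p) x v := by
  set δ := exp (-exp (2 * p))
  refine ⟨√δ, sqrt_pos.2 (exp_pos _), fun x hx₁ hx₁δ hx₂ hx₂δ v => ?_⟩
  have hs₁ : ‖x.1‖ ^ 2 < δ := (lt_sqrt hx₁.le).1 hx₁δ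
  have hs₂ : ‖x.2‖ ^ 2 < δ := (lt_sqrt hx₂.le).1 hx₂δ
  exact leviForm2_neg_radial_mul_nonneg
    (contDiffAt_logLogPow (by positivity) hs₁) (contDiffAt_logLogPow (by positivity) hs₂)
    (logLogPow_pos (by positivity) hs₁) (logLogPow_pos (by positivity) hs₂)
    (sq_deriv_logLogPow_le (by positivity) hs₁) (sq_deriv_logLogPow_le (by positivity) hs₂) v

/-- For `p ≥ 1`, the `(1,1)`-form `i∂∂̄ a_p(z,w)` is positive in a sufficiently small
neighborhood of the origin minus the coordinate axes. -/
theorem stmt8 (p : ℕ) (hp : 1 ≤ p) :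
    ∃ ε > 0, ∀ x : ℂ × ℂ,
      0 < ‖x.1‖ → ‖x.1‖ < ε → 0 < ‖x.2‖ → ‖x.2‖ < ε →
      ∀ v : ℂ × ℂ, 0 ≤ leviForm2 (apFun p) x v :=
  stmt8_general p
end

section
/- For any ε > 0, p ∈ ℕ, and k ∈ ℕ, the boundary integral ∫ over the torus {|z₀| = ε} × {|z₁| = ε} × ... × {|z_k| = ε} of the form (ln|ln|z₀||)^p |dz₀|/(|z₀| |ln|z₀||) · Π_{i=1}^k (ln|ln|z_i||)^p i dz_i dz̄_i / |z_i ln|z_i||² tends to 0 as ε → 0⁺. -/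
open MeasureTheory Set Filter Topology

/-!
The circle factor equals `2π (ln|ln ε|)^p / |ln ε|`, which tends to `0`. The disc density
`(ln|ln r|)^p · 2 / (r ln r)^2` is nonnegative for `r < e⁻¹`, and it is integrable on the
punctured disc of radius `e⁻¹`: in polar coordinates this asks for integrability of `r` times the
density on `(0, e⁻¹)`, and the substitution `r = exp (-exp s)` turns that into the Gamma integrand
`2 s^p e^{-s}` on `(0, ∞)`. Hence the disc factors stay below their value at `ε = e⁻¹`, and the
product tends to `0`.
-/

theorem integrableOn_fun_norm_preimage_Ioo_addHaar {E F : Type*} [NormedAddCommGroup E]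
    [NormedSpace ℝ E] [Nontrivial E] [FiniteDimensional ℝ E] [MeasurableSpace E] [BorelSpace E]
    (μ : Measure E) [μ.IsAddHaarMeasure] [NormedAddCommGroup F] [NormedSpace ℝ F]
    {f : ℝ → F} {a : ℝ}
    (hf : IntegrableOn (fun r ↦ r ^ (Module.finrank ℝ E - 1) • f r) (Ioo 0 a)) :
    IntegrableOn (fun x ↦ f ‖x‖) (norm ⁻¹' Ioo 0 a) μ := by
  rw [← integrable_indicator_iff (measurableSet_Ioo.preimage continuous_norm.measurable),
    show (norm ⁻¹' Ioo 0 a).indicator (fun x : E ↦ f ‖x‖) = fun x ↦ (Ioo 0 a).indicator f ‖x‖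
      from funext fun _ ↦ indicator_comp_right _, integrable_fun_norm_addHaar μ,
    ← integrable_indicator_iff measurableSet_Ioi]
  convert (integrable_indicator_iff measurableSet_Ioo).2 hf using 1
  ext r
  by_cases hr : r ∈ Ioo 0 a
  · simp [hr, hr.1]
  · by_cases h0 : 0 < r <;> simp [hr, h0]

/-- The factor `2` comes from `i dz ∧ dz̄ = 2 dx ∧ dy`. -/
noncomputable def loglogPoincareDensity (p : ℕ) (r : ℝ) : ℝ :=
  Real.log |Real.log r| ^ p * 2 / (r * Real.log r) ^ 2

theorem image_exp_neg_exp_Ioi_zero :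
    (fun s : ℝ ↦ Real.exp (-Real.exp s)) '' Ioi 0 = Ioo 0 (Real.exp (-1)) := by
  ext r
  constructor
  · rintro ⟨s, hs, rfl⟩
    exact ⟨Real.exp_pos _, by simpa using Real.one_lt_exp_iff.2 hs⟩
  · rintro ⟨hr0, hr⟩
    have hlog : 1 < -Real.log r := by
      have := Real.log_lt_log hr0 hr
      rw [Real.log_exp] at this
      linarith
    refine ⟨Real.log (-Real.log r), Real.log_pos hlog, ?_⟩
    simp only [Real.exp_log (zero_lt_one.trans hlog), neg_neg, Real.exp_log hr0]

theorem integrableOn_mul_loglogPoincareDensity (p : ℕ) :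
    IntegrableOn (fun r ↦ r * loglogPoincareDensity p r) (Ioo 0 (Real.exp (-1))) := by
  have hinj : InjOn (fun s : ℝ ↦ Real.exp (-Real.exp s)) (Ioi 0) := fun s _ t _ h ↦
    Real.exp_injective (neg_injective (Real.exp_injective h))
  have hderiv (s : ℝ) : HasDerivWithinAt (fun s : ℝ ↦ Real.exp (-Real.exp s))
      (-(Real.exp (-Real.exp s) * Real.exp s)) (Ioi 0) s := by
    simpa using ((Real.hasDerivAt_exp s).neg.exp).hasDerivWithinAt
  rw [← image_exp_neg_exp_Ioi_zero,
    integrableOn_image_iff_integrableOn_abs_deriv_smul measurableSet_Ioi (fun s _ ↦ hderiv s) hinj]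
  have hGamma := (Real.GammaIntegral_convergent (s := p + 1) (by positivity)).const_mul 2
  refine IntegrableOn.congr_fun hGamma (fun s (hs : 0 < s) ↦ ?_) measurableSet_Ioi
  simp only [add_sub_cancel_right, Real.rpow_natCast, smul_eq_mul, loglogPoincareDensity,
    Real.log_exp, abs_neg, abs_mul, Real.abs_exp]
  rw [Real.exp_neg, Real.exp_neg]
  field_simp

theorem loglogPoincareDensity_nonneg (p : ℕ) {r : ℝ} (hr : 1 ≤ |Real.log r|) :
    0 ≤ loglogPoincareDensity p r := by
  have := Real.log_nonneg hr
  unfold loglogPoincareDensity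
  positivity

theorem integrableOn_loglogPoincareDensity_norm (p : ℕ) :
    IntegrableOn (fun z : ℂ ↦ loglogPoincareDensity p ‖z‖) (norm ⁻¹' Ioo 0 (Real.exp (-1))) := by
  refine integrableOn_fun_norm_preimage_Ioo_addHaar volume ?_
  simpa [Complex.finrank_real_complex] using integrableOn_mul_loglogPoincareDensity p

theorem setIntegral_loglogPoincareDensity_norm_mem_Icc (p : ℕ) {ε : ℝ} (hε : ε ≤ Real.exp (-1)) :
    ∫ z : ℂ in norm ⁻¹' Ioo 0 ε, loglogPoincareDensity p ‖z‖ ∈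
      Icc 0 (∫ z : ℂ in norm ⁻¹' Ioo 0 (Real.exp (-1)), loglogPoincareDensity p ‖z‖) := by
  have hmeas (a : ℝ) : MeasurableSet ((norm : ℂ → ℝ) ⁻¹' Ioo 0 a) :=
    measurableSet_Ioo.preimage continuous_norm.measurable
  have hnonneg {z : ℂ} (hz : z ∈ norm ⁻¹' Ioo 0 (Real.exp (-1))) :
      0 ≤ loglogPoincareDensity p ‖z‖ := by
    refine loglogPoincareDensity_nonneg p ?_
    have := Real.log_lt_log hz.1 hz.2
    rw [Real.log_exp] at this
    rw [abs_of_neg (by linarith)]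
    linarith
  have hsub : (norm : ℂ → ℝ) ⁻¹' Ioo 0 ε ⊆ norm ⁻¹' Ioo 0 (Real.exp (-1)) :=
    preimage_mono (Ioo_subset_Ioo_right hε)
  refine ⟨setIntegral_nonneg (hmeas ε) fun z hz ↦ hnonneg (hsub hz),
    setIntegral_mono_set (integrableOn_loglogPoincareDensity_norm p) ?_ hsub.eventuallyLE⟩
  exact (ae_restrict_iff' (hmeas _)).2 (Eventually.of_forall fun z hz ↦ hnonneg hz)

theorem tendsto_log_abs_log_pow_div_abs_log (p : ℕ) :
    Tendsto (fun ε ↦ Real.log |Real.log ε| ^ p / |Real.log ε|) (𝓝[>] 0) (𝓝 0) := by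
  have := (Real.tendsto_pow_log_div_mul_add_atTop 1 0 p one_ne_zero).comp
    (tendsto_abs_atBot_atTop.comp Real.tendsto_log_nhdsGT_zero)
  simp only [one_mul, add_zero] at this
  exact this

/-- The Stokes boundary estimate: the product of the circle integral
`∫_{|z₀|=ε} (ln|ln|z₀||)^p |dz₀|/(|z₀||ln|z₀||)` (parametrized by arclength, `|z₀| = ε`)
with `k` disc-measure factors `∫_{|z_i|<ε} (ln|ln|z_i||)^p i dz_i∧dz̄_i / |z_i ln|z_i||²`
tends to `0` as `ε → 0⁺`. -/
theorem stmt18 (p k : ℕ) :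
    Filter.Tendsto
      (fun ε : ℝ =>
        (∫ _θ in (0 : ℝ)..(2 * Real.pi),
            (Real.log |Real.log ε|) ^ p / (ε * |Real.log ε|) * ε) *
        (∫ z in {z : ℂ | 0 < ‖z‖ ∧ ‖z‖ < ε},
            (Real.log |Real.log ‖z‖|) ^ p * 2 / (‖z‖ * Real.log ‖z‖) ^ 2) ^ k)
      (nhdsWithin 0 (Set.Ioi 0)) (nhds 0) := by
  have hcircle : Tendsto (fun ε : ℝ ↦ ∫ _θ in (0 : ℝ)..(2 * Real.pi),
      (Real.log |Real.log ε|) ^ p / (ε * |Real.log ε|) * ε) (𝓝[>] 0) (𝓝 0) := by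
    have := (tendsto_log_abs_log_pow_div_abs_log p).const_mul (2 * Real.pi)
    rw [mul_zero] at this
    refine this.congr' ?_
    filter_upwards [self_mem_nhdsWithin] with ε (hε : 0 < ε)
    rw [intervalIntegral.integral_const, smul_eq_mul, sub_zero, div_mul_eq_mul_div,
      mul_comm _ ε, mul_div_mul_left _ _ hε.ne']
  refine hcircle.zero_mul_isBoundedUnder_le (isBoundedUnder_of_eventually_le
    (a := (∫ z : ℂ in norm ⁻¹' Ioo 0 (Real.exp (-1)), loglogPoincareDensity p ‖z‖) ^ k) ?_)
  filter_upwards [Ioo_mem_nhdsGT (Real.exp_pos (-1))] with ε hε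
  obtain ⟨h0, hle⟩ := setIntegral_loglogPoincareDensity_norm_mem_Icc p hε.2.le
  exact (Real.norm_of_nonneg (pow_nonneg h0 k)).trans_le (pow_le_pow_left₀ h0 hle k)
end

section
/- On the plumbing cylinder, with coordinates satisfying f_j g_j = τ_j, f_j = u_j·(1+O(u_j)), g_j = v_j·(1+O(v_j)) (C¹-bounds ‖f_j∘u_j^{-1}‖_{C¹}, ‖g_j∘v_j^{-1}‖_{C¹} < C on D(2c)), one has | ln|τ_j| - ln|u_j| - ln|v_j| | ≤ C₁ for some constant C₁ > 0, and consequently the grafted hyperbolic-cylinder norm satisfies ‖du_j/u_j‖ ≤ C₂ |ln|u_j|| on {|τ_j|^{1/2} < |g_j| < e^{2δ}c} and ‖du_j/u_j‖ ≤ C₂|ln|v_j|| on {|τ_j|^{1/2} < |f_j| < e^{2δ}c}; hence the grafted metric on the twisted relative canonical bundle has log-log growth along the nodal and cusp divisors. -/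
lemma stmt19_aux (c C : ℝ) (hc : 0 < c) (f : ℂ → ℂ)
    (hf : DifferentiableOn ℂ f (Metric.ball 0 (2 * c)))
    (hf0 : f 0 = 0) (hf1 : deriv f 0 = 1)
    (hfC : ∀ z ∈ Metric.ball (0 : ℂ) (2 * c), ‖f z‖ + ‖deriv f z‖ ≤ C) :
    ∃ r > 0, r ≤ c ∧ ∀ u : ℂ, ‖u‖ < r → ‖u‖ / 2 ≤ ‖f u‖ ∧ ‖f u‖ ≤ C * ‖u‖ := by
  have hball : (0 : ℂ) ∈ Metric.ball (0 : ℂ) (2 * c) := by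
    simp [Metric.mem_ball]; linarith
  have hdiffAt : ∀ z ∈ Metric.ball (0 : ℂ) (2 * c), DifferentiableAt ℂ f z := fun z hz =>
    hf.differentiableAt (Metric.isOpen_ball.mem_nhds hz)
  -- continuity of deriv f at 0
  have han : AnalyticOnNhd ℂ (deriv f) (Metric.ball 0 (2 * c)) :=
    (hf.analyticOnNhd Metric.isOpen_ball).deriv
  have hcont : ContinuousAt (deriv f) 0 := (han 0 hball).continuousAt
  have := Metric.continuousAt_iff.1 hcont (1/2) (by norm_num)
  obtain ⟨ε, hε, hclose⟩ := this
  refine ⟨min (min ε c) c, by positivity, min_le_right _ _, fun u hu => ?_⟩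
  have huc : ‖u‖ < c := lt_of_lt_of_le hu (min_le_right _ _)
  have huε : ‖u‖ < ε := lt_of_lt_of_le hu (le_trans (min_le_left _ _) (min_le_left _ _))
  have hu2c : u ∈ Metric.ball (0 : ℂ) (2 * c) := by
    simp only [Metric.mem_ball, dist_zero_right]; linarith
  constructor
  · -- lower bound via MVT on f z - z
    set s : Set ℂ := Metric.ball (0 : ℂ) (min ε c) with hs
    have hsub : s ⊆ Metric.ball (0 : ℂ) (2 * c) := by
      apply Metric.ball_subset_ball; rw [two_mul]
      have := min_le_right ε c; linarith
    have key : ‖(f u - u) - (f 0 - 0)‖ ≤ 1/2 * ‖u - 0‖ := by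
      apply Convex.norm_image_sub_le_of_norm_deriv_le
        (f := fun z => f z - z) (s := s)
      · exact fun x hx => (hdiffAt x (hsub hx)).sub differentiableAt_id
      · intro x hx
        have hx' : deriv (fun z => f z - z) x = deriv f x - 1 :=
          ((hdiffAt x (hsub hx)).hasDerivAt.sub (hasDerivAt_id x)).deriv
        rw [hx']
        have hxε : dist x 0 < ε := lt_of_lt_of_le hx (min_le_left _ _)
        have := hclose hxε
        rw [dist_eq_norm, hf1] at this
        exact this.le
      · exact convex_ball _ _
      · exact Metric.mem_ball_self (by positivity)
      · show u ∈ s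
        rw [hs, Metric.mem_ball, dist_zero_right]
        exact lt_of_lt_of_le hu (min_le_left _ _)
    rw [hf0, sub_zero, sub_zero, sub_zero] at key
    have : ‖u‖ - ‖f u‖ ≤ ‖f u - u‖ := by
      have := norm_sub_norm_le (f u - u) (f u)
      simp at this
      calc ‖u‖ - ‖f u‖ ≤ ‖u‖ - ‖f u‖ := le_refl _
        _ ≤ ‖f u - u‖ := by
            have h1 : ‖u‖ ≤ ‖f u - u‖ + ‖f u‖ := by
              calc ‖u‖ = ‖f u - (f u - u)‖ := by ring_nf
                _ ≤ ‖f u‖ + ‖f u - u‖ := norm_sub_le _ _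
                _ = ‖f u - u‖ + ‖f u‖ := by ring
            linarith
    linarith
  · -- upper bound
    have key : ‖f u - f 0‖ ≤ C * ‖u - 0‖ := by
      apply Convex.norm_image_sub_le_of_norm_deriv_le hdiffAt
      · intro x hx
        have := hfC x hx
        have : ‖deriv f x‖ ≤ C := le_trans (le_add_of_nonneg_left (norm_nonneg _)) this
        exact this
      · exact convex_ball _ _
      · exact hball
      · exact hu2c
    simpa [hf0] using key

lemma stmt19_sinbd (L x : ℝ) :
    |L| * |Real.sin (Real.pi * x / L)| / Real.pi ≤ |x| := by
  rcases eq_or_ne L 0 with h | h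
  · simp [h, abs_nonneg]
  · have h1 := Real.abs_sin_le_abs (x := Real.pi * x / L)
    have hL : (0 : ℝ) < |L| := abs_pos.2 h
    have key : |L| * |Real.sin (Real.pi * x / L)| ≤ Real.pi * |x| := by
      calc |L| * |Real.sin (Real.pi * x / L)| ≤ |L| * |Real.pi * x / L| :=
            mul_le_mul_of_nonneg_left h1 (abs_nonneg _)
        _ = Real.pi * |x| := by
            rw [abs_div, abs_mul, abs_of_pos Real.pi_pos]
            field_simp
    calc |L| * |Real.sin (Real.pi * x / L)| / Real.pi ≤ Real.pi * |x| / Real.pi :=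
          (div_le_div_iff_of_pos_right Real.pi_pos).2 key
      _ = |x| := by field_simp

/-- On a plumbing cylinder with coordinates `u, v`, renormalized gluing functions
`f, g` (so that `f(u)·g(v) = τ`, `f(0) = g(0) = 0`, `f'(0) = g'(0) = 1`, with `C¹`-bounds
`‖f‖_{C¹}, ‖g‖_{C¹} < C` on `D(2c)`), one has `|ln|τ| - ln|u| - ln|v|| ≤ C₁` for some
constant `C₁ > 0`; consequently the grafted hyperbolic-cylinder norm
`‖du/u‖ = |ln|τ|| · |sin(π ln|u| / ln|τ|)| / π` satisfies `‖du/u‖ ≤ C₂|ln|u||` on the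
region `{|τ|^{1/2} < |g| < e^{2δ}c}` and `‖du/u‖ ≤ C₂|ln|v||` on the region
`{|τ|^{1/2} < |f| < e^{2δ}c}`. -/
theorem stmt19 (c δ C : ℝ) (hc : 0 < c) (hδ : 0 < δ) (hC : 0 < C)
    (f g : ℂ → ℂ)
    (hf : DifferentiableOn ℂ f (Metric.ball 0 (2 * c)))
    (hg : DifferentiableOn ℂ g (Metric.ball 0 (2 * c)))
    (hf0 : f 0 = 0) (hg0 : g 0 = 0)
    (hf1 : deriv f 0 = 1) (hg1 : deriv g 0 = 1)
    (hfC : ∀ z ∈ Metric.ball (0 : ℂ) (2 * c), ‖f z‖ + ‖deriv f z‖ ≤ C)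
    (hgC : ∀ z ∈ Metric.ball (0 : ℂ) (2 * c), ‖g z‖ + ‖deriv g z‖ ≤ C) :
    ∃ c₁ > 0, c₁ ≤ 2 * c ∧
      (∃ C₁ > 0, ∀ u v τ : ℂ, 0 < ‖u‖ → ‖u‖ < c₁ → 0 < ‖v‖ → ‖v‖ < c₁ →
        τ = f u * g v →
        |Real.log ‖τ‖ - Real.log ‖u‖ - Real.log ‖v‖| ≤ C₁) ∧
      (∃ C₂ > 0, ∀ u v τ : ℂ, 0 < ‖u‖ → ‖u‖ < c₁ → 0 < ‖v‖ → ‖v‖ < c₁ →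
        τ = f u * g v →
        (Real.sqrt ‖τ‖ < ‖g v‖ → ‖g v‖ < Real.exp (2 * δ) * c →
          |Real.log ‖τ‖| * |Real.sin (Real.pi * Real.log ‖u‖ / Real.log ‖τ‖)| / Real.pi
            ≤ C₂ * |Real.log ‖u‖|) ∧
        (Real.sqrt ‖τ‖ < ‖f u‖ → ‖f u‖ < Real.exp (2 * δ) * c →
          |Real.log ‖τ‖| * |Real.sin (Real.pi * Real.log ‖u‖ / Real.log ‖τ‖)| / Real.pi
            ≤ C₂ * |Real.log ‖v‖|)) := by
  obtain ⟨rf, hrf, hrfc, hfbd⟩ := stmt19_aux c C hc f hf hf0 hf1 hfC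
  obtain ⟨rg, hrg, hrgc, hgbd⟩ := stmt19_aux c C hc g hg hg0 hg1 hgC
  have hC1 : 1 ≤ C := by
    have h0 := hfC 0 (Metric.mem_ball_self (by linarith))
    rw [hf0, hf1] at h0
    simpa using h0
  have hlog2C : 0 < Real.log (2 * C) := Real.log_pos (by linarith)
  set c₁ := min (min rf rg) (Real.exp (-1) / C) with hc₁def
  have hc₁pos : 0 < c₁ := lt_min (lt_min hrf hrg) (by positivity)
  have hc₁f : c₁ ≤ rf := le_trans (min_le_left _ _) (min_le_left _ _)
  have hc₁g : c₁ ≤ rg := le_trans (min_le_left _ _) (min_le_right _ _)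
  have hc₁e : c₁ ≤ Real.exp (-1) := by
    refine le_trans (min_le_right _ _) ?_
    exact div_le_self (Real.exp_pos _).le hC1
  refine ⟨c₁, hc₁pos, le_trans hc₁f (le_trans hrfc (by linarith)), ?_, ?_⟩
  · -- Part 1
    refine ⟨2 * Real.log (2 * C), by linarith, fun u v τ hu huc hv hvc hτ => ?_⟩
    obtain ⟨hfl, hfu⟩ := hfbd u (lt_of_lt_of_le huc hc₁f)
    obtain ⟨hgl, hgu⟩ := hgbd v (lt_of_lt_of_le hvc hc₁g)
    have hfupos : 0 < ‖f u‖ := lt_of_lt_of_le (by linarith) hfl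
    have hgvpos : 0 < ‖g v‖ := lt_of_lt_of_le (by linarith) hgl
    have hlogτ : Real.log ‖τ‖ = Real.log ‖f u‖ + Real.log ‖g v‖ := by
      rw [hτ, norm_mul, Real.log_mul (ne_of_gt hfupos) (ne_of_gt hgvpos)]
    have habsf : |Real.log ‖f u‖ - Real.log ‖u‖| ≤ Real.log (2 * C) := by
      rw [abs_le]
      constructor
      · have h1 : Real.log (‖u‖ / 2) ≤ Real.log ‖f u‖ :=
          Real.log_le_log (by positivity) hfl
        rw [Real.log_div (ne_of_gt hu) two_ne_zero] at h1
        have h2 : Real.log 2 ≤ Real.log (2 * C) := Real.log_le_log two_pos (by linarith)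
        linarith
      · have h1 : Real.log ‖f u‖ ≤ Real.log (C * ‖u‖) := Real.log_le_log hfupos hfu
        rw [Real.log_mul (ne_of_gt hC) (ne_of_gt hu)] at h1
        have h2 : Real.log C ≤ Real.log (2 * C) := Real.log_le_log hC (by linarith)
        linarith
    have habsg : |Real.log ‖g v‖ - Real.log ‖v‖| ≤ Real.log (2 * C) := by
      rw [abs_le]
      constructor
      · have h1 : Real.log (‖v‖ / 2) ≤ Real.log ‖g v‖ :=
          Real.log_le_log (by positivity) hgl
        rw [Real.log_div (ne_of_gt hv) two_ne_zero] at h1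
        have h2 : Real.log 2 ≤ Real.log (2 * C) := Real.log_le_log two_pos (by linarith)
        linarith
      · have h1 : Real.log ‖g v‖ ≤ Real.log (C * ‖v‖) := Real.log_le_log hgvpos hgu
        rw [Real.log_mul (ne_of_gt hC) (ne_of_gt hv)] at h1
        have h2 : Real.log C ≤ Real.log (2 * C) := Real.log_le_log hC (by linarith)
        linarith
    have heq : Real.log ‖τ‖ - Real.log ‖u‖ - Real.log ‖v‖ =
        (Real.log ‖f u‖ - Real.log ‖u‖) + (Real.log ‖g v‖ - Real.log ‖v‖) := by
      rw [hlogτ]; ring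
    rw [heq]
    calc |(Real.log ‖f u‖ - Real.log ‖u‖) + (Real.log ‖g v‖ - Real.log ‖v‖)|
        ≤ |Real.log ‖f u‖ - Real.log ‖u‖| + |Real.log ‖g v‖ - Real.log ‖v‖| := abs_add_le _ _
      _ ≤ 2 * Real.log (2 * C) := by linarith
  · -- Part 2
    refine ⟨1 + Real.log (2 * C), by linarith, fun u v τ hu huc hv hvc hτ => ?_⟩
    obtain ⟨hfl, hfu⟩ := hfbd u (lt_of_lt_of_le huc hc₁f)
    obtain ⟨hgl, hgu⟩ := hgbd v (lt_of_lt_of_le hvc hc₁g)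
    have hfupos : 0 < ‖f u‖ := lt_of_lt_of_le (by linarith) hfl
    have hgvpos : 0 < ‖g v‖ := lt_of_lt_of_le (by linarith) hgl
    have hτn : ‖τ‖ = ‖f u‖ * ‖g v‖ := by rw [hτ, norm_mul]
    have hkey : |Real.log ‖τ‖| * |Real.sin (Real.pi * Real.log ‖u‖ / Real.log ‖τ‖)| / Real.pi
        ≤ |Real.log ‖u‖| := stmt19_sinbd _ _
    have hloguneg : Real.log ‖u‖ ≤ -1 := by
      have : Real.log ‖u‖ < Real.log (Real.exp (-1)) :=
        Real.log_lt_log hu (lt_of_lt_of_le huc hc₁e)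
      rw [Real.log_exp] at this
      linarith
    have hlogvneg : Real.log ‖v‖ ≤ -1 := by
      have : Real.log ‖v‖ < Real.log (Real.exp (-1)) :=
        Real.log_lt_log hv (lt_of_lt_of_le hvc hc₁e)
      rw [Real.log_exp] at this
      linarith
    constructor
    · intro _ _
      have h1 : (1 : ℝ) ≤ 1 + Real.log (2 * C) := by linarith
      calc |Real.log ‖τ‖| * |Real.sin (Real.pi * Real.log ‖u‖ / Real.log ‖τ‖)| / Real.pi
          ≤ |Real.log ‖u‖| := hkey
        _ ≤ (1 + Real.log (2 * C)) * |Real.log ‖u‖| :=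
            le_mul_of_one_le_left (abs_nonneg _) h1
    · intro hsq _
      -- ‖g v‖ < ‖f u‖
      have hτlt : ‖τ‖ < ‖f u‖ ^ 2 := (Real.sqrt_lt' hfupos).1 hsq
      have hgf : ‖g v‖ < ‖f u‖ := by
        rw [hτn, sq] at hτlt
        exact lt_of_mul_lt_mul_left hτlt hfupos.le
      -- ‖v‖ < 2C‖u‖
      have hv2C : ‖v‖ < 2 * C * ‖u‖ := by nlinarith
      have hlog : Real.log ‖v‖ < Real.log (2 * C) + Real.log ‖u‖ := by
        have := Real.log_lt_log hv hv2C
        rwa [Real.log_mul (by positivity) (ne_of_gt hu)] at this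
      have habs_u : |Real.log ‖u‖| = -Real.log ‖u‖ := abs_of_neg (by linarith)
      have habs_v : |Real.log ‖v‖| = -Real.log ‖v‖ := abs_of_neg (by linarith)
      calc |Real.log ‖τ‖| * |Real.sin (Real.pi * Real.log ‖u‖ / Real.log ‖τ‖)| / Real.pi
          ≤ |Real.log ‖u‖| := hkey
        _ ≤ (1 + Real.log (2 * C)) * |Real.log ‖v‖| := by
            rw [habs_u, habs_v]
            nlinarith [hlog2C, hlogvneg]
end
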